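/- (Contiguous relation for terminating ₃φ₂ series, type I.) Let 0<q<1, N ∈ ℕ with N ≥ 1, and let A, B, D, E be nonzero complex numbers such that none of (q;q)_t, (D;q)_t, (E;q)_t vanishes for 0 ≤ t ≤ N and A, B, ABq^{-N} ≠ 0. Set C = q^{-N}. Then B(1 − Aq/B)(1 − DE/(ABCq)) · [ (1−C) ₃φ₂(A,B,Cq; D,E; q, DE/(ABCq)) − (A−C) ₃φ₂(A,B,C; D,E; q, DE/(ABC)) ] = B(1−A)(1 − D/B)(1 − E/B) ₃φ₂(Aq, B/q, C; D, E; q, DE/(ABC)) − Aq(1−A)(1 − D/(Aq))(1 − E/(Aq)) ₃φ₂(A, B, C; D, E; q, DE/(ABC)), where ₃φ₂(a,b,c;d,e;q,w) = ∑_{t≥0} (a;q)_t(b;q)_t(c;q)_t w^t /((q;q)_t(d;q)_t(e;q)_t). -/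

import Mathlib

/-- Finite q-shifted factorial `(a;q)_n = ∏_{j=0}^{n-1} (1 - a q^j)`. -/
noncomputable def qPoch (q a : ℂ) (n : ℕ) : ℂ :=
  ∏ j ∈ Finset.range n, (1 - a * q ^ j)

/-!
The relation holds termwise up to a telescoping correction. Writing `w = DE/(ABC)` and
`u_s` for the `s`-th term of `₃φ₂(Aq, B, Cq; D, E; q, w/q)`, the `t`-th term of
"left side − right side" equals `g(t+1) − g(t)`, where `g(0) = 0` and
`g(s+1) = (Aq − B)(1 − A)(1 − C)(w/q) u_s`. For `t = s + 1` every term involved is `u_s` times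
a rational function of `q^s`, so this is a rational identity; for `t = 0` it is checked
directly. The sum over `t ≤ N` collapses to `g(N+1)`, which vanishes because the factor
`(Cq; q)_N` of `u_N` contains `1 − C q^N = 0`.
-/

open Finset

@[simp]
lemma qPoch_zero (q a : ℂ) : qPoch q a 0 = 1 := prod_range_zero _

lemma qPoch_succ (q a : ℂ) (n : ℕ) : qPoch q a (n + 1) = qPoch q a n * (1 - a * q ^ n) :=
  prod_range_succ _ _

lemma qPoch_succ' (q a : ℂ) (n : ℕ) : qPoch q a (n + 1) = (1 - a) * qPoch q (a * q) n := by
  rw [qPoch, prod_range_succ', pow_zero, mul_one, mul_comm]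
  exact congrArg _ (prod_congr rfl fun j _ => by ring)

lemma qPoch_div_succ {q : ℂ} (hq : q ≠ 0) (a : ℂ) (n : ℕ) :
    qPoch q (a / q) (n + 1) = (1 - a / q) * qPoch q a n := by
  rw [qPoch_succ', div_mul_cancel₀ a hq]

lemma one_sub_mul_pow_ne_zero {q a : ℂ} {n : ℕ} (h : qPoch q a (n + 1) ≠ 0) :
    1 - a * q ^ n ≠ 0 :=
  right_ne_zero_of_mul (qPoch_succ q a n ▸ h)

lemma qPoch_eq_zero {q a : ℂ} {k n : ℕ} (hkn : k < n) (ha : a * q ^ k = 1) : qPoch q a n = 0 :=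
  prod_eq_zero (mem_range.mpr hkn) (sub_eq_zero.mpr ha.symm)

noncomputable def phi32Term (q a b c d e z : ℂ) (t : ℕ) : ℂ :=
  qPoch q a t * qPoch q b t * qPoch q c t * z ^ t / (qPoch q q t * qPoch q d t * qPoch q e t)

section Phi32Term

variable {q : ℂ} (a b c d e z : ℂ) (n : ℕ)

@[simp]
lemma phi32Term_zero : phi32Term q a b c d e z 0 = 1 := by simp [phi32Term]

lemma phi32Term_succ :
    phi32Term q a b c d e z (n + 1) =
      (1 - a * q ^ n) * (1 - b * q ^ n) * (1 - c * q ^ n) * z /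
        ((1 - q * q ^ n) * (1 - d * q ^ n) * (1 - e * q ^ n)) *
      phi32Term q a b c d e z n := by
  rw [phi32Term, phi32Term, div_mul_div_comm, qPoch_succ q a, qPoch_succ q b, qPoch_succ q c,
    qPoch_succ q q, qPoch_succ q d, qPoch_succ q e]
  congr 1 <;> ring

lemma phi32Term_succ_eq_shift_a :
    phi32Term q a b c d e z (n + 1) =
      (1 - a) * (1 - b * q ^ n) * (1 - c * q ^ n) * z /
        ((1 - q * q ^ n) * (1 - d * q ^ n) * (1 - e * q ^ n)) *
      phi32Term q (a * q) b c d e z n := by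
  rw [phi32Term, phi32Term, div_mul_div_comm, qPoch_succ' q a, qPoch_succ q b, qPoch_succ q c,
    qPoch_succ q q, qPoch_succ q d, qPoch_succ q e]
  congr 1 <;> ring

lemma phi32Term_succ_eq_shift_ac (hq : q ≠ 0) :
    phi32Term q a b c d e z (n + 1) =
      (1 - a) * (1 - b * q ^ n) * (1 - c) * z * q ^ n /
        ((1 - q * q ^ n) * (1 - d * q ^ n) * (1 - e * q ^ n)) *
      phi32Term q (a * q) b (c * q) d e (z / q) n := by
  rw [phi32Term, phi32Term, div_mul_div_comm, qPoch_succ' q a, qPoch_succ q b, qPoch_succ' q c,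
    qPoch_succ q q, qPoch_succ q d, qPoch_succ q e, div_pow]
  congr 1
  · field_simp
    ring
  · ring

lemma phi32Term_succ_eq_shift_bc (hq : q ≠ 0) :
    phi32Term q a (b / q) c d e z (n + 1) =
      (1 - a * q ^ n) * (1 - b / q) * (1 - c) * z * q ^ n /
        ((1 - q * q ^ n) * (1 - d * q ^ n) * (1 - e * q ^ n)) *
      phi32Term q a b (c * q) d e (z / q) n := by
  rw [phi32Term, phi32Term, div_mul_div_comm, qPoch_succ q a, qPoch_div_succ hq, qPoch_succ' q c,
    qPoch_succ q q, qPoch_succ q d, qPoch_succ q e, div_pow]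
  congr 1
  · field_simp
    ring
  · ring

end Phi32Term

noncomputable def contiguousICert (q A B C D E : ℂ) : ℕ → ℂ
  | 0 => 0
  | s + 1 => (A * q - B) * (1 - A) * (1 - C) * (D * E / (A * B * C * q)) *
      phi32Term q (A * q) B (C * q) D E (D * E / (A * B * C * q)) s

lemma contiguousI_termwise {q A B C D E : ℂ} (hq : q ≠ 0) (hA : A ≠ 0) (hB : B ≠ 0) (hC : C ≠ 0)
    {t : ℕ} (hqt : qPoch q q t ≠ 0) (hDt : qPoch q D t ≠ 0) (hEt : qPoch q E t ≠ 0) :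
    B * (1 - A * q / B) * (1 - D * E / (A * B * C * q)) *
        ((1 - C) * phi32Term q A B (C * q) D E (D * E / (A * B * C * q)) t
          - (A - C) * phi32Term q A B C D E (D * E / (A * B * C)) t)
      - (B * (1 - A) * (1 - D / B) * (1 - E / B) *
          phi32Term q (A * q) (B / q) C D E (D * E / (A * B * C)) t
        - A * q * (1 - A) * (1 - D / (A * q)) * (1 - E / (A * q)) *
          phi32Term q A B C D E (D * E / (A * B * C)) t)
      = contiguousICert q A B C D E (t + 1) - contiguousICert q A B C D E t := by
  cases t with
  | zero =>
    simp only [phi32Term_zero, contiguousICert, sub_zero, mul_one]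
    field_simp
    ring
  | succ s =>
    have hqs := one_sub_mul_pow_ne_zero hqt
    have hDs := one_sub_mul_pow_ne_zero hDt
    have hEs := one_sub_mul_pow_ne_zero hEt
    rw [phi32Term_succ_eq_shift_a A B (C * q), phi32Term_succ_eq_shift_ac A B C _ _ _ _ hq,
      phi32Term_succ_eq_shift_bc (A * q) B C _ _ _ _ hq, div_div, contiguousICert,
      contiguousICert, phi32Term_succ (A * q) B (C * q)]
    field_simp
    ring

theorem phi32_contiguous_I_general (q : ℝ) (hq0 : 0 < q) (N : ℕ) (hN : 1 ≤ N)
    (A B D E C : ℂ) (hC : C = (q : ℂ) ^ (-(N : ℤ)))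
    (hA : A ≠ 0) (hB : B ≠ 0)
    (hden : ∀ t ≤ N, qPoch (q : ℂ) (q : ℂ) t ≠ 0 ∧ qPoch (q : ℂ) D t ≠ 0 ∧
      qPoch (q : ℂ) E t ≠ 0)
    (phi : ℂ → ℂ → ℂ → ℂ → ℂ → ℂ → ℂ)
    (hphi : ∀ x₁ x₂ x₃ y₁ y₂ z : ℂ, phi x₁ x₂ x₃ y₁ y₂ z =
      ∑ t ∈ Finset.range (N + 1),
        qPoch (q : ℂ) x₁ t * qPoch (q : ℂ) x₂ t * qPoch (q : ℂ) x₃ t * z ^ t /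
          (qPoch (q : ℂ) (q : ℂ) t * qPoch (q : ℂ) y₁ t * qPoch (q : ℂ) y₂ t)) :
    B * (1 - A * (q : ℂ) / B) * (1 - D * E / (A * B * C * (q : ℂ))) *
        ((1 - C) * phi A B (C * (q : ℂ)) D E (D * E / (A * B * C * (q : ℂ)))
          - (A - C) * phi A B C D E (D * E / (A * B * C)))
      = B * (1 - A) * (1 - D / B) * (1 - E / B) *
          phi (A * (q : ℂ)) (B / (q : ℂ)) C D E (D * E / (A * B * C))
        - A * (q : ℂ) * (1 - A) * (1 - D / (A * (q : ℂ))) * (1 - E / (A * (q : ℂ))) *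
          phi A B C D E (D * E / (A * B * C)) := by
  have hq : (q : ℂ) ≠ 0 := Complex.ofReal_ne_zero.mpr hq0.ne'
  have hC0 : C ≠ 0 := hC ▸ zpow_ne_zero _ hq
  obtain ⟨M, rfl⟩ : ∃ M, N = M + 1 := Nat.exists_eq_add_of_le' hN
  have hCq : C * q * (q : ℂ) ^ M = 1 := by
    rw [hC, mul_assoc, ← pow_succ', zpow_neg, zpow_natCast, inv_mul_cancel₀ (pow_ne_zero _ hq)]
  have hcert : contiguousICert q A B C D E (M + 2) = 0 := by
    rw [contiguousICert, phi32Term, qPoch_eq_zero (Nat.lt_succ_self M) hCq]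
    simp
  have hphi' : ∀ x₁ x₂ x₃ y₁ y₂ z, phi x₁ x₂ x₃ y₁ y₂ z =
      ∑ t ∈ range (M + 2), phi32Term q x₁ x₂ x₃ y₁ y₂ z t := hphi
  rw [← sub_eq_zero]
  simp only [hphi', mul_sum, ← sum_sub_distrib]
  rw [sum_congr rfl fun t ht =>
    let ⟨hqt, hDt, hEt⟩ := hden t (Nat.lt_succ_iff.mp (mem_range.mp ht))
    contiguousI_termwise hq hA hB hC0 hqt hDt hEt]
  rw [sum_range_sub, hcert, contiguousICert, sub_zero]

/-- Contiguous relation of type I for terminating `₃φ₂` series with `C = q^{-N}`. -/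
theorem phi32_contiguous_I (q : ℝ) (hq0 : 0 < q) (hq1 : q < 1) (N : ℕ) (hN : 1 ≤ N)
    (A B D E C : ℂ) (hC : C = (q : ℂ) ^ (-(N : ℤ)))
    (hA : A ≠ 0) (hB : B ≠ 0) (hABC : A * B * C ≠ 0)
    (hden : ∀ t ≤ N, qPoch (q : ℂ) (q : ℂ) t ≠ 0 ∧ qPoch (q : ℂ) D t ≠ 0 ∧
      qPoch (q : ℂ) E t ≠ 0)
    (phi : ℂ → ℂ → ℂ → ℂ → ℂ → ℂ → ℂ)
    (hphi : ∀ x₁ x₂ x₃ y₁ y₂ z : ℂ, phi x₁ x₂ x₃ y₁ y₂ z =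
      ∑ t ∈ Finset.range (N + 1),
        qPoch (q : ℂ) x₁ t * qPoch (q : ℂ) x₂ t * qPoch (q : ℂ) x₃ t * z ^ t /
          (qPoch (q : ℂ) (q : ℂ) t * qPoch (q : ℂ) y₁ t * qPoch (q : ℂ) y₂ t)) :
    B * (1 - A * (q : ℂ) / B) * (1 - D * E / (A * B * C * (q : ℂ))) *
        ((1 - C) * phi A B (C * (q : ℂ)) D E (D * E / (A * B * C * (q : ℂ)))
          - (A - C) * phi A B C D E (D * E / (A * B * C)))
      = B * (1 - A) * (1 - D / B) * (1 - E / B) *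
          phi (A * (q : ℂ)) (B / (q : ℂ)) C D E (D * E / (A * B * C))
        - A * (q : ℂ) * (1 - A) * (1 - D / (A * (q : ℂ))) * (1 - E / (A * (q : ℂ))) *
          phi A B C D E (D * E / (A * B * C)) :=
  phi32_contiguous_I_general q hq0 N hN A B D E C hC hA hB hden phi hphi
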